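/- arXiv:2102.04445 — 5 statements merged into one kernel-verified Lean document; each statement's English description precedes it below -/
import Mathlib

section
/- Let N ≥ 2, α ∈ ℂ with |α| ≤ r < 1, ψ, φ ∈ ℝ, and θ_j = 2πj/N + φ for j = 0,…,N−1. Then |(1/N) ∑_{j=0}^{N-1} M_{α,ψ}(e^{iθ_j}) − α| ≤ (2 + r) r^{N-1} / (1 − r). Consequently, for fixed r < 1 and any ε > 0, for all sufficiently large N the order parameter z(α,ψ,θ) is within ε of α uniformly on the disk of radius r. -/
/-!
Write `v_j = e^{iψ} e^{iφ} ω^j` with `ω = e^{2πi/N}` and `A = conj α`. Then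
`M(w_j) - α = (1 - |α|²) v_j / (1 + A v_j)`, and expanding `v/(1 + A v)` as a geometric series
up to order `N - 1` with exact remainder, the terms `v_j^m` with `0 < m < N` sum to zero over the
`N`-th roots of unity. Only the remainder `(-A)^{N-1} v_j^N / (1 + A v_j)` survives, of size at
most `|α|^{N-1} / (1 - |α|)`, so the average is within `(1 + |α|) |α|^{N-1}` of `α`.
-/

open Complex Real

/-- Möbius transformation preserving the unit circle. -/
noncomputable def mobius (α : ℂ) (ψ : ℝ) (w : ℂ) : ℂ :=
  (α + Complex.exp (Complex.I * ψ) * w) / (1 + (starRingEnd ℂ) α * Complex.exp (Complex.I * ψ) * w)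

/-- Order parameter of `N` phases transported by the Möbius map. -/
noncomputable def orderParam (N : ℕ) (α : ℂ) (ψ : ℝ) (θ : ℕ → ℝ) : ℂ :=
  ((1 : ℂ) / N) * ∑ j ∈ Finset.range N, mobius α ψ (Complex.exp (Complex.I * (θ j : ℂ)))

open Finset

theorem IsPrimitiveRoot.sum_mul_pow_pow_eq_zero {R : Type*} [CommRing R] [IsDomain R] {ζ : R}
    {n m : ℕ} (hζ : IsPrimitiveRoot ζ n) (hm : ¬n ∣ m) (c : R) :
    ∑ j ∈ range n, (c * ζ ^ j) ^ m = 0 := by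
  have hζm : ζ ^ m - 1 ≠ 0 := sub_ne_zero.mpr fun h => hm ((hζ.pow_eq_one_iff_dvd m).mp h)
  have hgeom : (∑ j ∈ range n, (ζ ^ m) ^ j) * (ζ ^ m - 1) = 0 := by
    rw [geom_sum_mul, ← pow_mul, mul_comm, pow_mul, hζ.pow_eq_one, one_pow, sub_self]
  simp_rw [mul_pow, ← pow_mul, mul_comm _ m, pow_mul, ← mul_sum]
  rw [(mul_eq_zero.mp hgeom).resolve_right hζm, mul_zero]

theorem div_one_add_mul_eq_sum_add {K : Type*} [Field K] {a v : K} (h : 1 + a * v ≠ 0) (n : ℕ) :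
    v / (1 + a * v) =
      ∑ k ∈ range n, (-a) ^ k * v ^ (k + 1) + (-a) ^ n * v ^ (n + 1) / (1 + a * v) := by
  have hgeom := geom_sum_mul_neg (-a * v) n
  have hsum : ∑ k ∈ range n, (-a) ^ k * v ^ (k + 1) = v * ∑ k ∈ range n, (-a * v) ^ k := by
    rw [mul_sum]
    exact sum_congr rfl fun k _ => by ring
  rw [hsum, div_eq_iff h, add_mul, div_mul_cancel₀ _ h]
  linear_combination -v * hgeom

theorem IsPrimitiveRoot.sum_div_one_add_mul_orbit {K : Type*} [Field K] {ζ : K} {n : ℕ}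
    (hζ : IsPrimitiveRoot ζ n) (hn : 0 < n) {a u : K} (h : ∀ j, 1 + a * (u * ζ ^ j) ≠ 0) :
    ∑ j ∈ range n, u * ζ ^ j / (1 + a * (u * ζ ^ j)) =
      ∑ j ∈ range n, (-a) ^ (n - 1) * (u * ζ ^ j) ^ n / (1 + a * (u * ζ ^ j)) := by
  have hpowers : ∑ j ∈ range n, ∑ k ∈ range (n - 1), (-a) ^ k * (u * ζ ^ j) ^ (k + 1) = 0 := by
    rw [sum_comm]
    refine sum_eq_zero fun k hk => ?_
    rw [← mul_sum, hζ.sum_mul_pow_pow_eq_zero (Nat.not_dvd_of_pos_of_lt k.succ_pos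
      (by grind)), mul_zero]
  simp_rw [div_one_add_mul_eq_sum_add (h _) (n - 1), Nat.sub_add_cancel hn]
  rw [sum_add_distrib, hpowers, zero_add]

theorem one_sub_norm_le_norm_one_add_mul {𝕜 : Type*} [NormedDivisionRing 𝕜] (a : 𝕜) {v : 𝕜}
    (hv : ‖v‖ = 1) : 1 - ‖a‖ ≤ ‖1 + a * v‖ := by
  simpa [norm_mul, hv] using norm_sub_norm_le (1 : 𝕜) (-(a * v))

theorem one_add_mul_ne_zero_of_norm_lt_one {𝕜 : Type*} [NormedDivisionRing 𝕜] {a v : 𝕜}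
    (ha : ‖a‖ < 1) (hv : ‖v‖ = 1) : 1 + a * v ≠ 0 :=
  norm_pos_iff.mp ((sub_pos.mpr ha).trans_le (one_sub_norm_le_norm_one_add_mul a hv))

theorem IsPrimitiveRoot.norm_sum_div_one_add_mul_orbit_le {ζ : ℂ} {n : ℕ}
    (hζ : IsPrimitiveRoot ζ n) (hn : 0 < n) {a u : ℂ} (ha : ‖a‖ < 1) (hu : ‖u‖ = 1) :
    ‖∑ j ∈ range n, u * ζ ^ j / (1 + a * (u * ζ ^ j))‖ ≤ n * (‖a‖ ^ (n - 1) / (1 - ‖a‖)) := by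
  have horbit (j : ℕ) : ‖u * ζ ^ j‖ = 1 := by simp [hu, hζ.norm'_eq_one hn.ne']
  rw [hζ.sum_div_one_add_mul_orbit hn fun j => one_add_mul_ne_zero_of_norm_lt_one ha (horbit j)]
  calc _ ≤ ∑ j ∈ range n, ‖(-a) ^ (n - 1) * (u * ζ ^ j) ^ n / (1 + a * (u * ζ ^ j))‖ :=
        norm_sum_le _ _
    _ ≤ ∑ j ∈ range n, ‖a‖ ^ (n - 1) / (1 - ‖a‖) := by
        refine sum_le_sum fun j _ => ?_
        rw [norm_div, norm_mul, norm_pow, norm_pow, norm_neg, horbit, one_pow, mul_one]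
        exact div_le_div_of_nonneg_left (by positivity) (sub_pos.mpr ha)
          (one_sub_norm_le_norm_one_add_mul a (horbit j))
    _ = n * (‖a‖ ^ (n - 1) / (1 - ‖a‖)) := by rw [sum_const, card_range, nsmul_eq_mul]

theorem mobius_sub_self (α : ℂ) (ψ : ℝ) (w : ℂ)
    (h : 1 + starRingEnd ℂ α * (exp (I * ψ) * w) ≠ 0) :
    mobius α ψ w - α =
      ((1 - ‖α‖ ^ 2 : ℝ) : ℂ) * (exp (I * ψ) * w / (1 + starRingEnd ℂ α * (exp (I * ψ) * w))) := by
  simp only [mobius, mul_assoc]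
  rw [div_sub' h, mul_div_assoc', ofReal_sub, ofReal_one, ofReal_pow, ← conj_mul']
  ring

theorem IsPrimitiveRoot.norm_average_mobius_orbit_sub_le {ζ : ℂ} {N : ℕ}
    (hζ : IsPrimitiveRoot ζ N) (hN : 0 < N) {c α : ℂ} (hc : ‖c‖ = 1) (hα : ‖α‖ < 1) (ψ : ℝ) :
    ‖(1 / N : ℂ) * ∑ j ∈ range N, mobius α ψ (c * ζ ^ j) - α‖ ≤ (1 + ‖α‖) * ‖α‖ ^ (N - 1) := by
  have hN' : (N : ℂ) ≠ 0 := by exact_mod_cast hN.ne'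
  have hu : ‖exp (I * ψ) * c‖ = 1 := by simp [hc, norm_exp]
  have hterm (j : ℕ) : mobius α ψ (c * ζ ^ j) - α = ((1 - ‖α‖ ^ 2 : ℝ) : ℂ) *
      (exp (I * ψ) * c * ζ ^ j / (1 + starRingEnd ℂ α * (exp (I * ψ) * c * ζ ^ j))) := by
    have hv : ‖exp (I * ψ) * (c * ζ ^ j)‖ = 1 := by simp [hc, norm_exp, hζ.norm'_eq_one hN.ne']
    rw [mobius_sub_self α ψ (c * ζ ^ j)
      (one_add_mul_ne_zero_of_norm_lt_one (by rwa [norm_conj]) hv)]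
    simp only [mul_assoc]
  have hα2 : 0 ≤ 1 - ‖α‖ ^ 2 := by nlinarith [norm_nonneg α]
  calc ‖(1 / N : ℂ) * ∑ j ∈ range N, mobius α ψ (c * ζ ^ j) - α‖
      = ‖(1 / N : ℂ) * ∑ j ∈ range N, (mobius α ψ (c * ζ ^ j) - α)‖ := by
        rw [sum_sub_distrib, sum_const, card_range, nsmul_eq_mul, mul_sub, one_div,
          inv_mul_cancel_left₀ hN']
    _ = 1 / N * ((1 - ‖α‖ ^ 2) * ‖∑ j ∈ range N,
          exp (I * ψ) * c * ζ ^ j / (1 + starRingEnd ℂ α * (exp (I * ψ) * c * ζ ^ j))‖) := by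
        simp_rw [hterm, ← mul_sum, norm_mul, norm_real, Real.norm_of_nonneg hα2, norm_div,
          norm_one, Complex.norm_natCast]
    _ ≤ 1 / N * ((1 - ‖α‖ ^ 2) * (N * (‖α‖ ^ (N - 1) / (1 - ‖α‖)))) := by
        gcongr
        simpa using
          hζ.norm_sum_div_one_add_mul_orbit_le hN (a := starRingEnd ℂ α) (by rwa [norm_conj]) hu
    _ = (1 + ‖α‖) * ‖α‖ ^ (N - 1) := by
        field_simp [(sub_pos.mpr hα).ne']
        ring

theorem orderParam_equally_spaced (N : ℕ) (α : ℂ) (ψ φ : ℝ) :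
    orderParam N α ψ (fun j => 2 * π * j / N + φ) =
      (1 / N : ℂ) * ∑ j ∈ range N, mobius α ψ (exp (φ * I) * exp (2 * π * I / N) ^ j) := by
  unfold orderParam
  congr 1
  refine sum_congr rfl fun j _ => ?_
  rw [← Complex.exp_nat_mul, ← Complex.exp_add]
  push_cast
  ring_nf

theorem norm_orderParam_equally_spaced_sub_le {N : ℕ} (hN : 0 < N) {α : ℂ} (hα : ‖α‖ < 1)
    (ψ φ : ℝ) :
    ‖orderParam N α ψ (fun j => 2 * π * j / N + φ) - α‖ ≤ (1 + ‖α‖) * ‖α‖ ^ (N - 1) := by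
  rw [orderParam_equally_spaced]
  exact (isPrimitiveRoot_exp N hN.ne').norm_average_mobius_orbit_sub_le hN
    (by simp [norm_exp]) hα ψ

theorem orderParam_close_to_alpha (r : ℝ) (hr0 : 0 ≤ r) (hr : r < 1) :
    (∀ N : ℕ, 2 ≤ N → ∀ α : ℂ, ‖α‖ ≤ r → ∀ ψ φ : ℝ,
      ‖orderParam N α ψ (fun j => 2 * Real.pi * j / N + φ) - α‖
        ≤ (2 + r) * r ^ (N - 1) / (1 - r))
    ∧ (∀ ε : ℝ, 0 < ε → ∃ N₀ : ℕ, ∀ N : ℕ, N₀ ≤ N → ∀ α : ℂ, ‖α‖ ≤ r → ∀ ψ φ : ℝ,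
      ‖orderParam N α ψ (fun j => 2 * Real.pi * j / N + φ) - α‖ ≤ ε) := by
  have hbound : ∀ N : ℕ, 2 ≤ N → ∀ α : ℂ, ‖α‖ ≤ r → ∀ ψ φ : ℝ,
      ‖orderParam N α ψ (fun j => 2 * Real.pi * j / N + φ) - α‖
        ≤ (2 + r) * r ^ (N - 1) / (1 - r) := by
    intro N hN α hα ψ φ
    calc _ ≤ (1 + ‖α‖) * ‖α‖ ^ (N - 1) :=
          norm_orderParam_equally_spaced_sub_le (by omega) (hα.trans_lt hr) ψ φ
      _ ≤ (1 + r) * r ^ (N - 1) := by gcongr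
      _ ≤ (2 + r) * r ^ (N - 1) / (1 - r) := by
          rw [le_div_iff₀ (by linarith)]
          nlinarith [mul_nonneg (pow_nonneg hr0 (N - 1)) (by positivity : (0 : ℝ) ≤ 1 + r + r ^ 2)]
  refine ⟨hbound, fun ε hε => ?_⟩
  have hlim : Filter.Tendsto (fun n : ℕ => (2 + r) * r ^ n / (1 - r)) Filter.atTop (nhds 0) := by
    simpa using ((tendsto_pow_atTop_nhds_zero_of_lt_one hr0 hr).const_mul (2 + r)).div_const (1 - r)
  obtain ⟨M, hM⟩ := Filter.eventually_atTop.mp (hlim.eventually_le_const hε)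
  refine ⟨M + 2, fun N hN α hα ψ φ => (hbound N (by omega) α hα ψ φ).trans (hM (N - 1) (by omega))⟩
end

section
/- Fix δ₀ ∈ (0,1) and define R : [δ₀ − 1, 1 − δ₀] → ℝ by R(x) = P(x)/Q(x) with P(x) = −(1/π)∫_0^{2π} sin ϑ/(1 + x sin ϑ) dϑ and Q(x) = (1/(2π))∫_0^{2π} dϑ/(1 + x sin ϑ). Then R is smooth, R(0) = 0, R(x) > 0 for x ∈ (0, 1 − δ₀], and R'(0) = 1. -/
open Real intervalIntegral

noncomputable def Pfun (x : ℝ) : ℝ :=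
  -(1 / Real.pi) * ∫ ϑ in (0:ℝ)..(2 * Real.pi), Real.sin ϑ / (1 + x * Real.sin ϑ)

noncomputable def Qfun (x : ℝ) : ℝ :=
  (1 / (2 * Real.pi)) * ∫ ϑ in (0:ℝ)..(2 * Real.pi), 1 / (1 + x * Real.sin ϑ)

noncomputable def Rfun (x : ℝ) : ℝ := Pfun x / Qfun x

open Filter Set Topology

lemma denom_pos {x : ℝ} (hx : |x| < 1) (θ : ℝ) : 0 < 1 + x * Real.sin θ := by
  have h1 : |x * Real.sin θ| < 1 := by
    calc |x * Real.sin θ| = |x| * |Real.sin θ| := abs_mul _ _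
    _ ≤ |x| * 1 := by gcongr; exact Real.abs_sin_le_one θ
    _ < 1 := by linarith
  nlinarith [abs_lt.mp h1]

lemma cont_f {x : ℝ} (hx : |x| < 1) : Continuous fun θ => 1 / (1 + x * Real.sin θ) :=
  continuous_const.div (by continuity) fun θ => (denom_pos hx θ).ne'

lemma hasDerivAt_F {x : ℝ} (hx : |x| < 1) {θ : ℝ} (hθ : θ ∈ Set.Ioo (-π) π) :
    HasDerivAt (fun θ => (2 / Real.sqrt (1 - x^2)) *
        Real.arctan ((x + Real.tan (θ/2)) / Real.sqrt (1 - x^2)))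
      (1 / (1 + x * Real.sin θ)) θ := by
  have hx2 : (0:ℝ) < 1 - x^2 := by nlinarith [abs_lt.mp hx]
  set s := Real.sqrt (1 - x^2) with hs_def
  have hs : 0 < s := Real.sqrt_pos.mpr hx2
  have hs2 : s^2 = 1 - x^2 := Real.sq_sqrt hx2.le
  have hc : Real.cos (θ/2) ≠ 0 := by
    apply (Real.cos_pos_of_mem_Ioo ⟨by linarith [hθ.1], by linarith [hθ.2]⟩).ne'
  have htan : HasDerivAt (fun θ : ℝ => Real.tan (θ/2)) (1 / Real.cos (θ/2)^2 * (1/2)) θ := by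
    exact (Real.hasDerivAt_tan hc).comp θ ((hasDerivAt_id θ).div_const 2)
  have h2 : HasDerivAt (fun θ : ℝ => (x + Real.tan (θ/2)) / s)
      ((1 / Real.cos (θ/2)^2 * (1/2)) / s) θ := (htan.const_add x).div_const s
  have h3 := ((Real.hasDerivAt_arctan _).comp θ h2).const_mul (2/s)
  refine h3.congr_deriv (Eq.symm ?_)
  have hsin : Real.sin θ = 2 * Real.sin (θ/2) * Real.cos (θ/2) := by
    rw [← Real.sin_two_mul]; ring_nf
  have hpy : Real.sin (θ/2)^2 + Real.cos (θ/2)^2 = 1 := Real.sin_sq_add_cos_sq _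
  rw [Real.tan_eq_sin_div_cos, hsin]
  have hd : 0 < 1 + x * (2 * Real.sin (θ/2) * Real.cos (θ/2)) := by
    rw [← hsin]; exact denom_pos hx θ
  set c := Real.cos (θ/2) with hcdef
  set sn := Real.sin (θ/2) with hsndef
  field_simp
  rw [div_eq_one_iff_eq (ne_of_gt (by linarith))]
  linear_combination hpy + c^2 * hs2

lemma integral_key {x : ℝ} (hx : |x| < 1) :
    ∫ θ in (0:ℝ)..(2*π), 1 / (1 + x * Real.sin θ) = 2 * π / Real.sqrt (1 - x^2) := by
  have hx2 : (0:ℝ) < 1 - x^2 := by nlinarith [abs_lt.mp hx]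
  set s := Real.sqrt (1 - x^2) with hs_def
  have hs : 0 < s := Real.sqrt_pos.mpr hx2
  set f : ℝ → ℝ := fun θ => 1 / (1 + x * Real.sin θ) with hf
  have hfc : Continuous f := cont_f hx
  have hint : ∀ a b : ℝ, IntervalIntegrable f MeasureTheory.volume a b :=
    fun a b => hfc.intervalIntegrable a b
  have hper : Function.Periodic f (2*π) := fun θ => by
    simp only [hf, Real.sin_periodic θ]
  have hshift : ∫ θ in (0:ℝ)..(2*π), f θ = ∫ θ in (-π)..π, f θ := by
    have h := hper.intervalIntegral_add_eq 0 (-π)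
    have e : -π + 2*π = π := by ring
    rwa [zero_add, e] at h
  set F : ℝ → ℝ := fun θ => (2 / s) * Real.arctan ((x + Real.tan (θ/2)) / s) with hFdef
  set G : ℝ → ℝ := fun y => ∫ θ in (-π)..y, f θ with hG
  have hGc : Continuous G := intervalIntegral.continuous_primitive hint (-π)
  have hphi : ∀ a ∈ Set.Ioo (0:ℝ) π, G a - G (-a) = F a - F (-a) := by
    intro a ha
    have hsub : Set.uIcc (-a) a ⊆ Set.Ioo (-π) π := by
      rw [Set.uIcc_of_le (by linarith [ha.1] : -a ≤ a)]
      intro y hy; exact ⟨by linarith [hy.1, ha.2], by linarith [hy.2, ha.2]⟩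
    have h1 : ∫ θ in (-a)..a, f θ = F a - F (-a) :=
      intervalIntegral.integral_eq_sub_of_hasDerivAt
        (fun θ hθ => hasDerivAt_F hx (hsub hθ)) (hint _ _)
    have h2 : (∫ θ in (-π)..(-a), f θ) + ∫ θ in (-a)..a, f θ = ∫ θ in (-π)..a, f θ :=
      intervalIntegral.integral_add_adjacent_intervals (hint _ _) (hint _ _)
    simp only [hG]
    linarith [h1, h2]
  have hlim1 : Tendsto (fun a => G a - G (-a)) (𝓝[<] π) (𝓝 (∫ θ in (-π)..π, f θ)) := by
    have hc : Continuous fun a => G a - G (-a) := hGc.sub (hGc.comp continuous_neg)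
    have h : Tendsto (fun a => G a - G (-a)) (𝓝[<] π) (𝓝 (G π - G (-π))) :=
      (hc.tendsto π).mono_left nhdsWithin_le_nhds
    simpa only [hG, intervalIntegral.integral_same, sub_zero] using h
  have hhalf : Tendsto (fun a : ℝ => a/2) (𝓝[<] π) (𝓝[<] (π/2)) := by
    rw [tendsto_nhdsWithin_iff]
    constructor
    · exact ((continuous_id.div_const 2).tendsto π).mono_left nhdsWithin_le_nhds
    · filter_upwards [self_mem_nhdsWithin] with a (ha : a < π)
      exact div_lt_div_of_pos_right ha two_pos  -- a/2 < π/2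
  have hneghalf : Tendsto (fun a : ℝ => -a/2) (𝓝[<] π) (𝓝[>] (-(π/2))) := by
    rw [tendsto_nhdsWithin_iff]
    constructor
    · have : Tendsto (fun a : ℝ => -a/2) (𝓝 π) (𝓝 (-π/2)) :=
        (continuous_id.neg.div_const 2).tendsto π
      rw [show -π/2 = -(π/2) by ring] at this
      exact this.mono_left nhdsWithin_le_nhds
    · filter_upwards [self_mem_nhdsWithin] with a (ha : a < π)
      show -(π/2) < -a/2
      have : -π/2 < -a/2 := by linarith
      linarith
  have htanTop : Tendsto (fun a : ℝ => Real.tan (a/2)) (𝓝[<] π) atTop :=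
    Real.tendsto_tan_pi_div_two.comp hhalf
  have htanBot : Tendsto (fun a : ℝ => Real.tan (-a/2)) (𝓝[<] π) atBot :=
    Real.tendsto_tan_neg_pi_div_two.comp hneghalf
  have hargTop : Tendsto (fun a : ℝ => (x + Real.tan (a/2)) / s) (𝓝[<] π) atTop :=
    (tendsto_atTop_add_const_left _ x htanTop).atTop_div_const hs
  have hargBot : Tendsto (fun a : ℝ => (x + Real.tan (-a/2)) / s) (𝓝[<] π) atBot :=
    (tendsto_atBot_add_const_left _ x htanBot).atBot_div_const hs
  have hFa : Tendsto (fun a => F a) (𝓝[<] π) (𝓝 ((2/s) * (π/2))) := by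
    exact (((Real.tendsto_arctan_atTop.mono_right nhdsWithin_le_nhds).comp hargTop).const_mul (2/s))
  have hFna : Tendsto (fun a => F (-a)) (𝓝[<] π) (𝓝 ((2/s) * (-(π/2)))) := by
    have h := ((Real.tendsto_arctan_atBot.mono_right nhdsWithin_le_nhds).comp hargBot).const_mul (2/s)
    simpa [hFdef] using h
  have hlim2 : Tendsto (fun a => F a - F (-a)) (𝓝[<] π) (𝓝 (2*π/s)) := by
    have h := hFa.sub hFna
    have e : (2/s) * (π/2) - (2/s) * (-(π/2)) = 2*π/s := by field_simp; ring
    rwa [e] at h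
  have heq : Tendsto (fun a => G a - G (-a)) (𝓝[<] π) (𝓝 (2*π/s)) := by
    refine hlim2.congr' ?_
    filter_upwards [Ioo_mem_nhdsLT_of_mem (Set.mem_Ioc.mpr ⟨Real.pi_pos, le_refl π⟩)] with a ha
    exact (hphi a ha).symm
  rw [hshift]
  exact tendsto_nhds_unique hlim1 heq

lemma integral_sin_key {x : ℝ} (hx : |x| < 1) (hx0 : x ≠ 0) :
    ∫ θ in (0:ℝ)..(2*π), Real.sin θ / (1 + x * Real.sin θ)
      = (1/x) * (2*π - 2*π/Real.sqrt (1 - x^2)) := by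
  have h1 : ∀ θ : ℝ, Real.sin θ / (1 + x * Real.sin θ)
      = (1/x) * (1 - 1/(1 + x * Real.sin θ)) := by
    intro θ
    have hd := denom_pos hx θ
    field_simp
    rw [mul_comm (sin θ) x, eq_sub_iff_add_eq, ← add_div, div_eq_one_iff_eq hd.ne', add_comm]
  rw [intervalIntegral.integral_congr (g := fun θ => (1/x) * (1 - 1/(1 + x * Real.sin θ)))
    (fun θ _ => h1 θ)]
  rw [intervalIntegral.integral_const_mul,
    intervalIntegral.integral_sub intervalIntegrable_const ((cont_f hx).intervalIntegrable _ _),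
    integral_key hx]
  simp

lemma Rfun_eq {x : ℝ} (hx : |x| < 1) :
    Rfun x = 2*x / (1 + Real.sqrt (1 - x^2)) := by
  have hx2 : (0:ℝ) < 1 - x^2 := by nlinarith [abs_lt.mp hx]
  have hs : 0 < Real.sqrt (1 - x^2) := Real.sqrt_pos.mpr hx2
  have hs2 : Real.sqrt (1 - x^2)^2 = 1 - x^2 := Real.sq_sqrt hx2.le
  rcases eq_or_ne x 0 with rfl | hx0
  · have : Pfun 0 = 0 := by
      simp [Pfun, integral_sin, Real.cos_two_pi]
    simp [Rfun, this]
  · unfold Rfun Pfun Qfun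
    rw [integral_key hx, integral_sin_key hx hx0]
    set s := Real.sqrt (1 - x^2)
    have hπ := Real.pi_pos
    have h1s : (0:ℝ) < 1 + s := by linarith
    field_simp
    linear_combination (-1) * hs2

theorem Rfun_properties (δ₀ : ℝ) (hδ₀ : 0 < δ₀) (hδ₀' : δ₀ < 1) :
    ContDiffOn ℝ (⊤ : ℕ∞) Rfun (Set.Icc (δ₀ - 1) (1 - δ₀))
    ∧ Rfun 0 = 0
    ∧ (∀ x : ℝ, x ∈ Set.Ioc 0 (1 - δ₀) → 0 < Rfun x)
    ∧ deriv Rfun 0 = 1 := by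
  have habs : ∀ x ∈ Set.Icc (δ₀ - 1) (1 - δ₀), |x| < 1 := fun x hx =>
    abs_lt.mpr ⟨by linarith [hx.1], by linarith [hx.2]⟩
  refine ⟨?_, ?_, ?_, ?_⟩
  · have hg : ContDiffOn ℝ (⊤ : ℕ∞) (fun x : ℝ => 2*x / (1 + Real.sqrt (1 - x^2)))
        (Set.Icc (δ₀ - 1) (1 - δ₀)) := by
      intro x hx
      apply ContDiffAt.contDiffWithinAt
      have h1 : (0:ℝ) < 1 - x^2 := by nlinarith [abs_lt.mp (habs x hx)]
      have hsq : ContDiffAt ℝ (⊤ : ℕ∞) (fun x : ℝ => Real.sqrt (1 - x^2)) x := by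
        have h2 : ContDiffAt ℝ (⊤ : ℕ∞) (fun x : ℝ => 1 - x^2) x := by fun_prop
        exact (Real.contDiffAt_sqrt h1.ne').comp x h2
      apply ContDiffAt.div
      · fun_prop
      · exact contDiffAt_const.add hsq
      · have := Real.sqrt_nonneg (1 - x^2)
        intro h; linarith
    exact hg.congr (fun x hx => Rfun_eq (habs x hx))
  · rw [Rfun_eq (by norm_num : |(0:ℝ)| < 1)]; norm_num
  · intro x hx
    have h1 : |x| < 1 := abs_lt.mpr ⟨by linarith [hx.1], by linarith [hx.2]⟩
    rw [Rfun_eq h1]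
    apply div_pos (by linarith [hx.1])
    have := Real.sqrt_nonneg (1 - x^2); linarith
  · have hev : Rfun =ᶠ[𝓝 0] fun x : ℝ => 2*x / (1 + Real.sqrt (1 - x^2)) := by
      have hmem : Set.Ioo (-1:ℝ) 1 ∈ 𝓝 (0:ℝ) := Ioo_mem_nhds (by norm_num) (by norm_num)
      exact Filter.eventuallyEq_of_mem hmem fun x hx => Rfun_eq (abs_lt.mpr ⟨hx.1, hx.2⟩)
    have h1 : HasDerivAt (fun x : ℝ => 1 - x^2) 0 0 := by
      simpa using (hasDerivAt_pow 2 (0:ℝ)).const_sub 1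
    have h2 : HasDerivAt (fun x : ℝ => Real.sqrt (1 - x^2)) 0 0 := by
      simpa using h1.sqrt (by norm_num)
    have h3 : HasDerivAt (fun x : ℝ => 1 + Real.sqrt (1 - x^2)) 0 0 := h2.const_add 1
    have h4 : HasDerivAt (fun x : ℝ => 2*x) 2 0 := by
      simpa using (hasDerivAt_id (0:ℝ)).const_mul 2
    have h5 := h4.div h3 (by norm_num [Real.sqrt_one] : (1:ℝ) + Real.sqrt (1 - 0^2) ≠ 0)
    rw [hev.deriv_eq, show (fun x : ℝ => 2*x / (1 + Real.sqrt (1 - x^2))) = ((fun x : ℝ => 2*x) / fun x : ℝ => 1 + Real.sqrt (1 - x^2)) from rfl, h5.deriv]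
    norm_num [Real.sqrt_one]
end

section
/- For every r ∈ (0,1), σ ∈ (0,1), and δ ∈ (0, π/4): (1/(2π)) ∫_0^{2π} cos(η − δ)/(1 + σ r sin(η + δ)) dη = −(1/2) sin(2δ) P(σ r), where P(x) = −(1/π)∫_0^{2π} sin ϑ/(1 + x sin ϑ) dϑ. In particular the integral is strictly negative for r > 0. -/
open Real intervalIntegral

/-!
Substituting `ϑ = η + δ` (legitimate by `2π`-periodicity) turns `cos (η - δ)` into
`cos (ϑ - 2δ) = cos 2δ · cos ϑ + sin 2δ · sin ϑ`. The `cos ϑ` part integrates to zero,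
since `cos ϑ / (1 + x sin ϑ)` is `g (sin ϑ) · sin' ϑ` and `sin` takes the same value at both
ends. What remains is `sin 2δ · ∫ sin ϑ / (1 + x sin ϑ) = -π sin 2δ · P(x)`. For `0 < x < 1`
the integrand `sin ϑ / (1 + x sin ϑ)` lies below `sin ϑ`, whose integral vanishes, strictly at
`ϑ = π/2`; hence `P(x) > 0`.
-/

theorem Function.Periodic.intervalIntegral_comp_add_right {f : ℝ → ℝ} {T : ℝ}
    (hf : Function.Periodic f T) (s : ℝ) :
    ∫ x in (0:ℝ)..T, f (x + s) = ∫ x in (0:ℝ)..T, f x := by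
  rw [intervalIntegral.integral_comp_add_right, zero_add, add_comm T s]
  simpa using hf.intervalIntegral_add_eq s 0

theorem integral_comp_sin_mul_cos_eq_zero {g : ℝ → ℝ}
    (hg : ContinuousOn g (Set.Icc (-1) 1)) :
    ∫ t in (0:ℝ)..(2 * π), g (sin t) * cos t = 0 := by
  have hsin : Set.MapsTo sin (Set.uIcc 0 (2 * π)) (Set.Icc (-1) 1) :=
    fun t _ => ⟨neg_one_le_sin t, sin_le_one t⟩
  have := integral_comp_mul_deriv' (fun t _ => hasDerivAt_sin t) continuous_cos.continuousOn
    (hg.mono hsin.image_subset)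
  simpa [sin_two_pi] using this

section OneAddMulSin

variable {x : ℝ}

theorem one_add_mul_pos_of_abs_lt_one {s : ℝ} (hx : |x| < 1) (hs : |s| ≤ 1) :
    0 < 1 + x * s := by
  have : |x * s| < 1 := by
    rw [abs_mul]
    exact (mul_le_of_le_one_right (abs_nonneg x) hs).trans_lt hx
  linarith [neg_abs_le (x * s)]

theorem one_add_mul_sin_pos (hx : |x| < 1) (t : ℝ) : 0 < 1 + x * sin t :=
  one_add_mul_pos_of_abs_lt_one hx (abs_sin_le_one t)

theorem continuous_div_one_add_mul_sin {g : ℝ → ℝ} (hg : Continuous g) (hx : |x| < 1) :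
    Continuous fun t => g t / (1 + x * sin t) :=
  hg.div (by fun_prop) fun t => (one_add_mul_sin_pos hx t).ne'

theorem integral_cos_div_one_add_mul_sin (hx : |x| < 1) :
    ∫ t in (0:ℝ)..(2 * π), cos t / (1 + x * sin t) = 0 := by
  have hg : ContinuousOn (fun s => (1 + x * s)⁻¹) (Set.Icc (-1) 1) :=
    (continuousOn_const.add (continuousOn_const.mul continuousOn_id)).inv₀
      fun s hs => (one_add_mul_pos_of_abs_lt_one hx (abs_le.mpr hs)).ne'
  simpa only [div_eq_inv_mul] using integral_comp_sin_mul_cos_eq_zero hg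

theorem integral_sin_div_one_add_mul_sin_neg (hx₀ : 0 < x) (hx₁ : x < 1) :
    ∫ t in (0:ℝ)..(2 * π), sin t / (1 + x * sin t) < 0 := by
  have hx : |x| < 1 := abs_lt.mpr ⟨by linarith, hx₁⟩
  have hle (t : ℝ) : sin t / (1 + x * sin t) ≤ sin t := by
    rw [div_le_iff₀ (one_add_mul_sin_pos hx t)]
    nlinarith [sq_nonneg (sin t)]
  have hlt : sin (π / 2) / (1 + x * sin (π / 2)) < sin (π / 2) := by
    rw [sin_pi_div_two, div_lt_one (by linarith)]
    linarith
  calc ∫ t in (0:ℝ)..(2 * π), sin t / (1 + x * sin t)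
      < ∫ t in (0:ℝ)..(2 * π), sin t :=
        integral_lt_integral_of_continuousOn_of_le_of_exists_lt (by positivity)
          (continuous_div_one_add_mul_sin continuous_sin hx).continuousOn
          continuous_sin.continuousOn (fun t _ => hle t)
          ⟨π / 2, ⟨by positivity, by linarith [pi_pos]⟩, hlt⟩
    _ = 0 := by simp

theorem Pfun_pos (hx₀ : 0 < x) (hx₁ : x < 1) : 0 < Pfun x := by
  rw [Pfun]
  exact mul_pos_of_neg_of_neg (neg_neg_of_pos (by positivity))
    (integral_sin_div_one_add_mul_sin_neg hx₀ hx₁)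

theorem integral_cos_sub_div_one_add_mul_sin_add (hx : |x| < 1) (δ : ℝ) :
    ∫ η in (0:ℝ)..(2 * π), cos (η - δ) / (1 + x * sin (η + δ))
      = sin (2 * δ) * ∫ t in (0:ℝ)..(2 * π), sin t / (1 + x * sin t) := by
  set F : ℝ → ℝ := fun t => cos (t - 2 * δ) / (1 + x * sin t)
  have hF : Function.Periodic F (2 * π) := fun t => by
    simp only [F, sin_add_two_pi, show t + 2 * π - 2 * δ = t - 2 * δ + 2 * π by ring,
      cos_add_two_pi]
  have hcos := continuous_div_one_add_mul_sin continuous_cos hx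
  have hsin := continuous_div_one_add_mul_sin continuous_sin hx
  calc ∫ η in (0:ℝ)..(2 * π), cos (η - δ) / (1 + x * sin (η + δ))
      = ∫ η in (0:ℝ)..(2 * π), F (η + δ) := by
        simp only [F, show ∀ η, η + δ - 2 * δ = η - δ from fun η => by ring]
    _ = ∫ t in (0:ℝ)..(2 * π), F t := hF.intervalIntegral_comp_add_right δ
    _ = ∫ t in (0:ℝ)..(2 * π), (cos (2 * δ) * (cos t / (1 + x * sin t))
          + sin (2 * δ) * (sin t / (1 + x * sin t))) := by
        congr 1 with t
        simp only [F, cos_sub]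
        ring
    _ = sin (2 * δ) * ∫ t in (0:ℝ)..(2 * π), sin t / (1 + x * sin t) := by
        rw [integral_add ((hcos.intervalIntegrable _ _).const_mul _)
            ((hsin.intervalIntegrable _ _).const_mul _),
          integral_const_mul, integral_const_mul, integral_cos_div_one_add_mul_sin hx]
        ring

end OneAddMulSin

theorem averaged_integral_identity (r σ δ : ℝ) (hr : r ∈ Set.Ioo (0:ℝ) 1)
    (hσ : σ ∈ Set.Ioo (0:ℝ) 1) (hδ : δ ∈ Set.Ioo 0 (Real.pi / 4)) :
    (1 / (2 * Real.pi)) * ∫ η in (0:ℝ)..(2 * Real.pi),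
        Real.cos (η - δ) / (1 + σ * r * Real.sin (η + δ))
      = -(1 / 2) * Real.sin (2 * δ) * Pfun (σ * r)
    ∧ (1 / (2 * Real.pi)) * (∫ η in (0:ℝ)..(2 * Real.pi),
        Real.cos (η - δ) / (1 + σ * r * Real.sin (η + δ))) < 0 := by
  obtain ⟨hr₀, hr₁⟩ := hr
  obtain ⟨hσ₀, hσ₁⟩ := hσ
  have hx₀ : 0 < σ * r := mul_pos hσ₀ hr₀
  have hx₁ : σ * r < 1 := by nlinarith
  have hidentity : (1 / (2 * π)) * ∫ η in (0:ℝ)..(2 * π),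
      cos (η - δ) / (1 + σ * r * sin (η + δ)) = -(1 / 2) * sin (2 * δ) * Pfun (σ * r) := by
    rw [integral_cos_sub_div_one_add_mul_sin_add (abs_lt.mpr ⟨by linarith, hx₁⟩), Pfun]
    ring
  have hsin : 0 < sin (2 * δ) :=
    sin_pos_of_pos_of_lt_pi (by linarith [hδ.1]) (by linarith [hδ.2, pi_pos])
  refine ⟨hidentity, ?_⟩
  rw [hidentity]
  linarith [mul_pos hsin (Pfun_pos hx₀ hx₁)]
end

section
/- Let f : phases → ℂ and g : phases → ℝ be arbitrary functions, and suppose α(t) ∈ 𝔻 and ψ(t) ∈ ℝ solve α̇ = i(fα² + gα + f̄) and ψ̇ = fα + g + f̄ ᾱ. Then for each fixed θ ∈ ℝ, the phase φ(t) defined by e^{iφ(t)} = M_{α(t),ψ(t)}(e^{iθ}) satisfies φ̇ = f e^{iφ} + g + f̄ e^{−iφ}. -/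
/-!
The parameter equations are exactly what makes `z = M_{α,ψ}(w)` satisfy, for every fixed `w`,
the same Riccati equation `ż = i (f z² + g z + f̄)` as `α = M_{α,ψ}(0)`: with `N = α + e^{iψ} w`,
`D = 1 + ᾱ e^{iψ} w`, one finds `Ḋ = i f e^{iψ} w (|α|² - 1)` and `Ṅ D - N Ḋ = i (f N² + g N D + f̄ D²)`.
On the circle `z = e^{iφ}` gives `ż = i φ̇ z`, and dividing the Riccati equation by `i z` yields
`φ̇ = f z + g + f̄ z⁻¹` with `z⁻¹ = e^{-iφ}`.
-/

open Real Complex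

open ComplexConjugate

theorem one_add_conj_mul_ne_zero {a u : ℂ} (ha : ‖a‖ < 1) (hu : ‖u‖ ≤ 1) :
    1 + conj a * u ≠ 0 := by
  intro h
  have hnorm : ‖conj a * u‖ = 1 := by
    rw [eq_neg_of_add_eq_zero_right h, norm_neg, norm_one]
  have hlt : ‖conj a * u‖ < 1 := by
    rw [norm_mul, Complex.norm_conj]
    calc ‖a‖ * ‖u‖ ≤ ‖a‖ := mul_le_of_le_one_right (norm_nonneg a) hu
      _ < 1 := ha
  exact hlt.ne hnorm

theorem ofReal_re_mul_add_add_conj_mul_conj (F a : ℂ) (G : ℝ) :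
    ((F * a + G + conj F * conj a).re : ℂ) = F * a + G + conj F * conj a := by
  refine Complex.conj_eq_iff_re.mp ?_
  simp only [map_add, map_mul, Complex.conj_conj, Complex.conj_ofReal]
  ring

theorem HasDerivAt.riccati_mobius {a u : ℝ → ℂ} {F : ℂ} {G : ℝ} {t : ℝ}
    (ha : HasDerivAt a (I * (F * a t ^ 2 + G * a t + conj F)) t)
    (hu : HasDerivAt u (I * u t * (F * a t + G + conj F * conj (a t))) t)
    (hD : 1 + conj (a t) * u t ≠ 0) :
    HasDerivAt (fun s => (a s + u s) / (1 + conj (a s) * u s))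
      (I * (F * ((a t + u t) / (1 + conj (a t) * u t)) ^ 2
        + G * ((a t + u t) / (1 + conj (a t) * u t)) + conj F)) t := by
  have hconj : HasDerivAt (fun s => conj (a s))
      (-I * (conj F * conj (a t) ^ 2 + G * conj (a t) + F)) t := by
    refine ha.star.congr_deriv ?_
    simp only [star_mul', star_add, star_pow, Complex.star_def, Complex.conj_I,
      Complex.conj_ofReal, Complex.conj_conj]
  refine ((ha.add hu).div ((hconj.mul hu).const_add 1) hD).congr_deriv ?_
  simp only [Pi.add_apply, Pi.mul_apply]
  -- `field_simp` orders the denominator as `1 + u t * conj (a t)` and needs `hD` in that form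
  rw [mul_comm (conj (a t))] at hD ⊢
  field_simp
  ring

theorem hasDerivAt_mobius_of_riccati {α : ℝ → ℂ} {ψ : ℝ → ℝ} {F : ℂ} {G : ℝ} {t : ℝ} {w : ℂ}
    (hα : ‖α t‖ < 1) (hw : ‖w‖ ≤ 1)
    (hαode : HasDerivAt α (I * (F * α t ^ 2 + G * α t + conj F)) t)
    (hψode : HasDerivAt ψ (F * α t + G + conj F * conj (α t)).re t) :
    HasDerivAt (fun s => mobius (α s) (ψ s) w)
      (I * (F * mobius (α t) (ψ t) w ^ 2 + G * mobius (α t) (ψ t) w + conj F)) t := by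
  set u : ℝ → ℂ := fun s => exp (I * ψ s) * w
  have hu : HasDerivAt u (I * u t * (F * α t + G + conj F * conj (α t))) t := by
    refine (((hψode.ofReal_comp).const_mul I).cexp.mul_const w).congr_deriv ?_
    rw [ofReal_re_mul_add_add_conj_mul_conj]
    ring
  have hD : 1 + conj (α t) * u t ≠ 0 := by
    refine one_add_conj_mul_ne_zero hα ?_
    rw [norm_mul, norm_exp_I_mul_ofReal, one_mul]
    exact hw
  have hmobius : ∀ s, mobius (α s) (ψ s) w = (α s + u s) / (1 + conj (α s) * u s) := fun s => by
    rw [mobius, mul_assoc]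
  simp only [hmobius]
  exact hαode.riccati_mobius hu hD

theorem ofReal_deriv_eq_of_hasDerivAt_cexp {φ : ℝ → ℝ} {t : ℝ} {A B C : ℂ}
    (hφ : DifferentiableAt ℝ φ t)
    (h : HasDerivAt (fun s => exp (I * φ s))
      (I * (A * exp (I * φ t) ^ 2 + B * exp (I * φ t) + C)) t) :
    ((deriv φ t : ℝ) : ℂ) = A * exp (I * φ t) + B + C * exp (-I * φ t) := by
  have hchain : HasDerivAt (fun s => exp (I * φ s)) (exp (I * φ t) * (I * (deriv φ t : ℝ))) t :=
    (hφ.hasDerivAt.ofReal_comp.const_mul I).cexp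
  have hz : exp (I * φ t) ≠ 0 := exp_ne_zero _
  have hinv : exp (-I * φ t) = (exp (I * φ t))⁻¹ := by
    rw [neg_mul, Complex.exp_neg]
  have hriccati : exp (I * φ t) * deriv φ t = A * exp (I * φ t) ^ 2 + B * exp (I * φ t) + C :=
    mul_left_cancel₀ I_ne_zero (by linear_combination hchain.unique h)
  rw [hinv]
  field_simp
  linear_combination hriccati

theorem watanabe_strogatz_reduction (f : ℝ → ℂ) (g : ℝ → ℝ) (α : ℝ → ℂ) (ψ : ℝ → ℝ)
    (hα : ∀ t : ℝ, ‖α t‖ < 1)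
    (hαode : ∀ t : ℝ, HasDerivAt α
      (Complex.I * (f t * (α t) ^ 2 + (g t : ℂ) * α t + (starRingEnd ℂ) (f t))) t)
    (hψode : ∀ t : ℝ, HasDerivAt ψ
      ((f t * α t + (g t : ℂ) + (starRingEnd ℂ) (f t) * (starRingEnd ℂ) (α t)).re) t)
    (θ : ℝ) (φ : ℝ → ℝ) (hφdiff : ∀ t : ℝ, DifferentiableAt ℝ φ t)
    (hφ : ∀ t : ℝ, Complex.exp (Complex.I * (φ t : ℂ))
      = mobius (α t) (ψ t) (Complex.exp (Complex.I * (θ : ℂ)))) :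
    ∀ t : ℝ, ((deriv φ t : ℝ) : ℂ)
      = f t * Complex.exp (Complex.I * (φ t : ℂ)) + (g t : ℂ)
        + (starRingEnd ℂ) (f t) * Complex.exp (-Complex.I * (φ t : ℂ)) := by
  intro t
  have horbit := hasDerivAt_mobius_of_riccati (hα t) (norm_exp_I_mul_ofReal θ).le
    (hαode t) (hψode t)
  simp only [← hφ] at horbit
  exact ofReal_deriv_eq_of_hasDerivAt_cexp (hφdiff t) horbit
end

section
/- Let β > 1, δ ∈ (0, π/4), σ > 0 and suppose σ‖v‖ > β − 1 with v = (β sin 2δ, 1 + β cos 2δ). Then the equation ⟨v, (cos(φ−δ), sin(φ−δ))⟩ = −(β−1)/σ has exactly two solutions φ ∈ [0, 2π), and exactly one of them satisfies ⟨w, (cos(φ−δ), sin(φ−δ))⟩ > 0, where w = (1 + β cos 2δ, −β sin 2δ) is v rotated clockwise by 90°. That unique solution is φ^C = δ − π + arctan((1 + β cos 2δ)/(β sin 2δ)) + arccos((β−1)/(σ‖v‖)). -/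
/-! Harmonic addition gives `A cos x + B sin x = R cos (x - γ)` and
`B cos x - A sin x = R sin (γ - x)` with `R = √(A² + B²)`, `γ = arctan (B / A)`. For `|c| < R`,
`R cos θ = -c` holds exactly for `θ ≡ ±(ψ - π)` mod `2π`, where `ψ = arccos (c / R) ∈ (0, π)`, and
`sin (-θ) = ±sin ψ` on these two classes, so exactly one of them lies in the half-plane.
Solutions are taken as points of `Real.Angle`, each with a single representative in `[0, 2π)`. -/

open Real

lemma existsUnique_mem_Ico_coe_eq (θ : Angle) :
    ∃! x : ℝ, x ∈ Set.Ico 0 (2 * π) ∧ (x : Angle) = θ := by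
  have : Fact (0 < 2 * π) := ⟨two_pi_pos⟩
  obtain ⟨a, ha, rfl⟩ := AddCircle.eq_coe_Ico θ
  refine ⟨a, ⟨ha, rfl⟩, fun x ⟨hx, hxa⟩ => ?_⟩
  rw [← zero_add (2 * π)] at ha hx
  exact (AddCircle.coe_eq_coe_iff_of_mem_Ico hx ha).mp hxa

lemma mul_sin_arccos_div_pos {R c : ℝ} (hR : 0 < R) (hc : |c| < R) :
    0 < R * sin (arccos (c / R)) := by
  have hcR : |c / R| < 1 := by rwa [abs_div, abs_of_pos hR, div_lt_one hR]
  exact mul_pos hR <| sin_pos_of_pos_of_lt_pi (arccos_pos.2 (abs_lt.1 hcR).2)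
    (arccos_lt_pi.2 (abs_lt.1 hcR).1)

lemma mul_cos_eq_neg_iff {R c θ : ℝ} (hR : 0 < R) (hc : |c| ≤ R) :
    R * cos θ = -c ↔
      (θ : Angle) = arccos (c / R) - π ∨ (θ : Angle) = π - arccos (c / R) := by
  have hcR : |c / R| ≤ 1 := by rwa [abs_div, abs_of_pos hR, div_le_one hR]
  have hcos : cos (π - arccos (c / R)) = -(c / R) := by
    rw [cos_pi_sub, cos_arccos (neg_le_of_abs_le hcR) (le_of_abs_le hcR)]
  rw [← Angle.coe_sub, ← Angle.coe_sub, ← neg_sub π, Angle.coe_neg, or_comm,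
    ← Angle.cos_eq_iff_coe_eq_or_eq_neg, hcos, ← neg_div, eq_div_iff hR.ne', mul_comm]

section HarmonicAddition

variable {A B : ℝ}

lemma sqrt_one_add_div_sq (hA : 0 < A) : √(1 + (B / A) ^ 2) = √(A ^ 2 + B ^ 2) / A := by
  rw [show 1 + (B / A) ^ 2 = (A ^ 2 + B ^ 2) / A ^ 2 by field_simp, sqrt_div' _ (sq_nonneg A),
    sqrt_sq hA.le]

lemma cos_arctan_div (hA : 0 < A) : cos (arctan (B / A)) = A / √(A ^ 2 + B ^ 2) := by
  rw [cos_arctan, sqrt_one_add_div_sq hA, one_div_div]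

lemma sin_arctan_div (hA : 0 < A) : sin (arctan (B / A)) = B / √(A ^ 2 + B ^ 2) := by
  rw [sin_arctan, sqrt_one_add_div_sq hA, div_div_div_cancel_right₀ hA.ne']

lemma mul_cos_add_mul_sin_eq (hA : 0 < A) (x : ℝ) :
    A * cos x + B * sin x = √(A ^ 2 + B ^ 2) * cos (x - arctan (B / A)) := by
  have hR : √(A ^ 2 + B ^ 2) ≠ 0 := by positivity
  rw [cos_sub, cos_arctan_div hA, sin_arctan_div hA]
  field_simp

lemma mul_cos_sub_mul_sin_eq (hA : 0 < A) (x : ℝ) :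
    B * cos x - A * sin x = √(A ^ 2 + B ^ 2) * sin (arctan (B / A) - x) := by
  have hR : √(A ^ 2 + B ^ 2) ≠ 0 := by positivity
  rw [sin_sub, cos_arctan_div hA, sin_arctan_div hA]
  field_simp

end HarmonicAddition

section PhaseEquation

variable {A B c x : ℝ}

theorem mul_cos_add_mul_sin_eq_neg_iff (hA : 0 < A) (hc : |c| ≤ √(A ^ 2 + B ^ 2)) :
    A * cos x + B * sin x = -c ↔
      (x : Angle) = arccos (c / √(A ^ 2 + B ^ 2)) - π + arctan (B / A) ∨
      (x : Angle) = π - arccos (c / √(A ^ 2 + B ^ 2)) + arctan (B / A) := by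
  have hR : 0 < √(A ^ 2 + B ^ 2) := by positivity
  rw [mul_cos_add_mul_sin_eq hA, mul_cos_eq_neg_iff hR hc, Angle.coe_sub, sub_eq_iff_eq_add,
    sub_eq_iff_eq_add]

lemma mul_cos_sub_mul_sin_pos (hA : 0 < A) (hc : |c| < √(A ^ 2 + B ^ 2))
    (hx : (x : Angle) = arccos (c / √(A ^ 2 + B ^ 2)) - π + arctan (B / A)) :
    0 < B * cos x - A * sin x := by
  rw [mul_cos_sub_mul_sin_eq hA, ← Angle.sin_coe, Angle.coe_sub, hx, sub_add_cancel_right,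
    neg_sub, ← Angle.coe_sub, Angle.sin_coe, sin_pi_sub]
  exact mul_sin_arccos_div_pos (by positivity) hc

lemma mul_cos_sub_mul_sin_neg (hA : 0 < A) (hc : |c| < √(A ^ 2 + B ^ 2))
    (hx : (x : Angle) = π - arccos (c / √(A ^ 2 + B ^ 2)) + arctan (B / A)) :
    B * cos x - A * sin x < 0 := by
  rw [mul_cos_sub_mul_sin_eq hA, ← Angle.sin_coe, Angle.coe_sub, hx, sub_add_cancel_right,
    Angle.sin_neg, ← Angle.coe_sub, Angle.sin_coe, sin_pi_sub, mul_neg, neg_neg_iff_pos]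
  exact mul_sin_arccos_div_pos (by positivity) hc

theorem mul_cos_add_mul_sin_eq_neg_and_pos_iff (hA : 0 < A) (hc : |c| < √(A ^ 2 + B ^ 2)) :
    A * cos x + B * sin x = -c ∧ 0 < B * cos x - A * sin x ↔
      (x : Angle) = arccos (c / √(A ^ 2 + B ^ 2)) - π + arctan (B / A) := by
  rw [mul_cos_add_mul_sin_eq_neg_iff hA hc.le]
  refine ⟨fun ⟨hx, hpos⟩ => hx.resolve_right fun hx' => ?_,
    fun hx => ⟨.inl hx, mul_cos_sub_mul_sin_pos hA hc hx⟩⟩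
  exact (mul_cos_sub_mul_sin_neg hA hc hx').not_gt hpos

end PhaseEquation

theorem unique_stable_sync_phase (β δ σ : ℝ) (hβ : 1 < β) (hδ : δ ∈ Set.Ioo 0 (Real.pi / 4))
    (hσ : 0 < σ)
    (hexist : β - 1 < σ * Real.sqrt (1 + β ^ 2 + 2 * β * Real.cos (2 * δ))) :
    (∃ a b : ℝ, a ≠ b ∧
      {φ : ℝ | φ ∈ Set.Ico 0 (2 * Real.pi) ∧
        β * Real.sin (2 * δ) * Real.cos (φ - δ) + (1 + β * Real.cos (2 * δ)) * Real.sin (φ - δ)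
          = -((β - 1) / σ)} = {a, b})
    ∧ (∃! φ : ℝ, φ ∈ Set.Ico 0 (2 * Real.pi) ∧
        β * Real.sin (2 * δ) * Real.cos (φ - δ) + (1 + β * Real.cos (2 * δ)) * Real.sin (φ - δ)
          = -((β - 1) / σ)
        ∧ 0 < (1 + β * Real.cos (2 * δ)) * Real.cos (φ - δ)
              + (-(β * Real.sin (2 * δ))) * Real.sin (φ - δ))
    ∧ (∀ φ : ℝ, (φ ∈ Set.Ico 0 (2 * Real.pi) ∧
        β * Real.sin (2 * δ) * Real.cos (φ - δ) + (1 + β * Real.cos (2 * δ)) * Real.sin (φ - δ)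
          = -((β - 1) / σ)
        ∧ 0 < (1 + β * Real.cos (2 * δ)) * Real.cos (φ - δ)
              + (-(β * Real.sin (2 * δ))) * Real.sin (φ - δ)) →
        ∃ m : ℤ, φ = δ - Real.pi + Real.arctan ((1 + β * Real.cos (2 * δ)) / (β * Real.sin (2 * δ)))
          + Real.arccos ((β - 1) / (σ * Real.sqrt (1 + β ^ 2 + 2 * β * Real.cos (2 * δ))))
          + 2 * Real.pi * m) := by
  obtain ⟨hδ0, hδ1⟩ := hδ
  have hA : 0 < β * sin (2 * δ) :=
    mul_pos (by linarith) (sin_pos_of_pos_of_lt_pi (by linarith) (by linarith))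
  have hnorm : (β * sin (2 * δ)) ^ 2 + (1 + β * cos (2 * δ)) ^ 2
      = 1 + β ^ 2 + 2 * β * cos (2 * δ) := by
    linear_combination β ^ 2 * sin_sq_add_cos_sq (2 * δ)
  have hc : |(β - 1) / σ| < √((β * sin (2 * δ)) ^ 2 + (1 + β * cos (2 * δ)) ^ 2) := by
    rwa [hnorm, abs_of_pos (div_pos (by linarith) hσ), div_lt_iff₀ hσ, mul_comm]
  have hsol := fun φ : ℝ => mul_cos_add_mul_sin_eq_neg_iff (x := φ - δ) hA hc.le
  have hstable := fun φ : ℝ => mul_cos_add_mul_sin_eq_neg_and_pos_iff (x := φ - δ) hA hc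
  have hunstable := fun φ : ℝ => mul_cos_sub_mul_sin_neg (x := φ - δ) hA hc
  simp only [Angle.coe_sub, sub_eq_iff_eq_add, hnorm, div_div] at hsol hstable hunstable
  simp only [neg_mul, ← sub_eq_add_neg]
  set ψ := arccos ((β - 1) / (σ * √(1 + β ^ 2 + 2 * β * cos (2 * δ))))
  set γ := arctan ((1 + β * cos (2 * δ)) / (β * sin (2 * δ)))
  obtain ⟨a, ⟨haI, ha⟩, ha_uniq⟩ := existsUnique_mem_Ico_coe_eq (ψ - π + γ + δ)
  obtain ⟨b, ⟨hbI, hb⟩, hb_uniq⟩ := existsUnique_mem_Ico_coe_eq (π - ψ + γ + δ)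
  refine ⟨⟨a, b, fun hab => ?_, ?_⟩,
    by simpa only [hstable] using existsUnique_mem_Ico_coe_eq _, ?_⟩
  · exact ((hstable a).2 ha).2.not_gt (hab ▸ hunstable b hb)
  · ext φ
    simp only [Set.mem_ofPred_eq, hsol, Set.mem_insert_iff, Set.mem_singleton_iff]
    refine ⟨fun ⟨hφ, h⟩ => h.imp (ha_uniq φ ⟨hφ, ·⟩) (hb_uniq φ ⟨hφ, ·⟩), ?_⟩
    rintro (rfl | rfl)
    exacts [⟨haI, .inl ha⟩, ⟨hbI, .inr hb⟩]
  · rintro φ ⟨-, hφ⟩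
    have : (φ : Angle) = ↑(δ - π + γ + ψ) := by
      rw [(hstable φ).1 hφ, Angle.coe_add, Angle.coe_add, Angle.coe_sub]; abel
    obtain ⟨m, hm⟩ := Angle.angle_eq_iff_two_pi_dvd_sub.1 this
    exact ⟨m, by linarith⟩
end
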